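/- arXiv:2202.03573 — 5 statements merged into one kernel-verified Lean document; each statement's English description precedes it below -/
import Mathlib

section
/- Let G=(V,E,w) be an undirected weighted graph on n nodes with positive edge weights, W its weighted adjacency matrix, D the diagonal degree matrix with D_{uu} = sum over neighbors v of u of w(u,v), and L = D − W its Laplacian. Then every entry of the matrix (L + I)^{-1} is non-negative, and consequently every entry of (L + I)^{-2} is non-negative. -/
/-!
`L + 1` is a Z-matrix whose action on a vector `x` at a node `u` is
`x u + ∑ v, w(u,v) (x u - x v)`. At a node where `x` is minimal the sum is `≤ 0`, so if
`(L + 1) x ≥ 0` then `x ≥ 0` (a discrete minimum principle). This makes `L + 1` injective,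
hence invertible, and applied to the columns of `(L + 1)⁻¹`, which `L + 1` maps to the
standard basis vectors, it shows that the inverse is entrywise non-negative.
-/

open Matrix

namespace Matrix

variable {V R : Type*} [Fintype V]

theorem mul_apply_nonneg_of_nonneg [Semiring R] [PartialOrder R] [IsOrderedRing R]
    {A B : Matrix V V R} (hA : ∀ u v, 0 ≤ A u v) (hB : ∀ u v, 0 ≤ B u v) (u v : V) :
    0 ≤ (A * B) u v :=
  Finset.sum_nonneg fun w _ => mul_nonneg (hA u w) (hB w v)

variable [DecidableEq V]

def weightedLaplacian [Ring R] (W : Matrix V V R) : Matrix V V R :=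
  diagonal (fun u => ∑ v, W u v) - W

theorem weightedLaplacian_mulVec_apply [Ring R] (W : Matrix V V R) (x : V → R) (u : V) :
    (weightedLaplacian W *ᵥ x) u = ∑ v, W u v * (x u - x v) := by
  rw [weightedLaplacian, sub_mulVec, Pi.sub_apply, mulVec_diagonal, Finset.sum_mul]
  simp only [mulVec, dotProduct, ← Finset.sum_sub_distrib, mul_sub]

section LinearOrderedField

variable [Field R] [LinearOrder R] [IsStrictOrderedRing R] {W : Matrix V V R}

theorem nonneg_of_nonneg_weightedLaplacian_add_one_mulVec (hW : ∀ u v, 0 ≤ W u v)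
    {x : V → R} (hx : 0 ≤ (weightedLaplacian W + 1) *ᵥ x) : 0 ≤ x := by
  intro u
  have : Nonempty V := ⟨u⟩
  obtain ⟨m, hm⟩ := Finite.exists_min x
  have hmin : ((weightedLaplacian W + 1) *ᵥ x) m ≤ x m := by
    rw [add_mulVec, one_mulVec, Pi.add_apply, weightedLaplacian_mulVec_apply,
      add_le_iff_nonpos_left]
    exact Finset.sum_nonpos fun v _ =>
      mul_nonpos_of_nonneg_of_nonpos (hW m v) (sub_nonpos.mpr (hm v))
  exact (hx m).trans (hmin.trans (hm u))

theorem isUnit_det_weightedLaplacian_add_one (hW : ∀ u v, 0 ≤ W u v) :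
    IsUnit (weightedLaplacian W + 1).det := by
  rw [isUnit_iff_ne_zero, Ne, ← exists_mulVec_eq_zero_iff]
  rintro ⟨x, hx0, hx⟩
  have hneg : (weightedLaplacian W + 1) *ᵥ (-x) = 0 := by rw [mulVec_neg, hx, neg_zero]
  exact hx0 (le_antisymm
    (neg_nonneg.mp (nonneg_of_nonneg_weightedLaplacian_add_one_mulVec hW hneg.ge))
    (nonneg_of_nonneg_weightedLaplacian_add_one_mulVec hW hx.ge))

theorem inv_weightedLaplacian_add_one_apply_nonneg (hW : ∀ u v, 0 ≤ W u v) (u v : V) :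
    0 ≤ (weightedLaplacian W + 1)⁻¹ u v := by
  set A := weightedLaplacian W + 1
  have hcol : A *ᵥ (A⁻¹ *ᵥ Pi.single v 1) = Pi.single v 1 := by
    rw [mulVec_mulVec, mul_nonsing_inv A (isUnit_det_weightedLaplacian_add_one hW), one_mulVec]
  have hcol_nonneg : 0 ≤ A⁻¹ *ᵥ Pi.single v 1 :=
    nonneg_of_nonneg_weightedLaplacian_add_one_mulVec hW
      (hcol.symm ▸ Pi.single_nonneg.mpr zero_le_one)
  rw [mulVec_single_one] at hcol_nonneg
  exact hcol_nonneg u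

end LinearOrderedField

end Matrix

theorem stmt_1_general {V : Type*} [Fintype V] [DecidableEq V]
    (W : Matrix V V ℝ) (hnn : ∀ u v, 0 ≤ W u v) :
    let D : Matrix V V ℝ := Matrix.diagonal fun u => ∑ v, W u v
    let L : Matrix V V ℝ := D - W
    (∀ u v, 0 ≤ (L + 1)⁻¹ u v) ∧
    (∀ u v, 0 ≤ ((L + 1)⁻¹ * (L + 1)⁻¹) u v) := by
  intro D L
  have hinv : ∀ u v, 0 ≤ (L + 1)⁻¹ u v := inv_weightedLaplacian_add_one_apply_nonneg hnn
  exact ⟨hinv, mul_apply_nonneg_of_nonneg hinv hinv⟩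

/-- Every entry of `(L + I)⁻¹` is non-negative, and consequently every entry of
`(L + I)⁻²` is non-negative, where `L = D - W` is the Laplacian of an undirected
weighted graph with non-negative symmetric weights. -/
theorem stmt_1 {V : Type*} [Fintype V] [DecidableEq V]
    (W : Matrix V V ℝ) (hsymm : W.IsSymm) (hnn : ∀ u v, 0 ≤ W u v)
    (hloop : ∀ u, W u u = 0) :
    let D : Matrix V V ℝ := Matrix.diagonal fun u => ∑ v, W u v
    let L : Matrix V V ℝ := D - W
    (∀ u v, 0 ≤ (L + 1)⁻¹ u v) ∧
    (∀ u v, 0 ≤ ((L + 1)⁻¹ * (L + 1)⁻¹) u v) :=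
  stmt_1_general W hnn
end

section
/- Let U be a finite ground set, k a positive integer, and f a monotone submodular set function on subsets of U with f(∅) = 0. Let S_G be the set produced by the greedy algorithm that starts from the empty set and for k iterations adds an element maximizing the marginal gain of f. Then f(S_G) ≥ (1 − 1/e) · max_{S ⊆ U, |S| ≤ k} f(S). -/
/-!
Let `T` be a set with `|T| ≤ k` and write `gᵢ = f T - f Sᵢ`. Submodularity bounds
`f (Sᵢ ∪ T) - f Sᵢ` by the sum of the marginal gains of the elements of `T` over `Sᵢ`, each of
which is at most the greedy gain `f Sᵢ₊₁ - f Sᵢ`; with monotonicity this gives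
`gᵢ ≤ k (gᵢ - gᵢ₊₁)`, i.e. `gᵢ₊₁ ≤ (1 - 1/k) gᵢ`. Hence `g_k ≤ (1 - 1/k)^k g₀ ≤ e⁻¹ f T`.
-/

open Finset

section Submodular

variable {U : Type*} [DecidableEq U] {f : Finset U → ℝ}

theorem le_add_sum_marginal (hmono : Monotone f)
    (hsub : ∀ S T : Finset U, S ⊆ T → ∀ x ∉ T, f (insert x T) - f T ≤ f (insert x S) - f S)
    (A B : Finset U) : f (A ∪ B) ≤ f A + ∑ x ∈ B, (f (insert x A) - f A) := by
  induction B using Finset.induction_on with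
  | empty => simp
  | @insert b B hb ih =>
    have hstep : f (A ∪ insert b B) - f (A ∪ B) ≤ f (insert b A) - f A := by
      rw [union_insert]
      by_cases hbAB : b ∈ A ∪ B
      · rw [insert_eq_self.mpr hbAB, sub_self, sub_nonneg]
        exact hmono (subset_insert b A)
      · exact hsub A (A ∪ B) subset_union_left b hbAB
    rw [sum_insert hb]
    linarith

theorem sub_le_mul_gain_of_isMax_gain (hmono : Monotone f)
    (hsub : ∀ S T : Finset U, S ⊆ T → ∀ x ∉ T, f (insert x T) - f T ≤ f (insert x S) - f S)
    {A T : Finset U} {x : U} {k : ℕ} (hT : #T ≤ k)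
    (hx : ∀ y, f (insert y A) - f A ≤ f (insert x A) - f A) :
    f T - f A ≤ k * (f (insert x A) - f A) := by
  have hgain : 0 ≤ f (insert x A) - f A := sub_nonneg.mpr (hmono (subset_insert x A))
  calc f T - f A ≤ f (A ∪ T) - f A := by gcongr; exact hmono subset_union_right
    _ ≤ ∑ y ∈ T, (f (insert y A) - f A) := by linarith [le_add_sum_marginal hmono hsub A T]
    _ ≤ #T * (f (insert x A) - f A) := by
      simpa using sum_le_card_nsmul T _ _ fun y _ => hx y
    _ ≤ k * (f (insert x A) - f A) := by gcongr

end Submodular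

theorem le_one_sub_div_pow_mul_of_le_mul_sub {g : ℕ → ℝ} {k : ℕ}
    (h : ∀ i < k, g i ≤ k * (g i - g (i + 1))) : ∀ n ≤ k, g n ≤ (1 - 1 / k) ^ n * g 0 := by
  intro n hn
  induction n with
  | zero => simp
  | succ n ih =>
    have hk : (1 : ℝ) ≤ k := by exact_mod_cast n.succ_pos.trans_le hn
    have hdecay : g (n + 1) ≤ (1 - 1 / k) * g n := by
      have : g n / k ≤ g n - g (n + 1) := (div_le_iff₀ (by linarith)).mpr (by linarith [h n hn])
      rw [one_sub_mul, one_div_mul_eq_div]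
      linarith
    calc g (n + 1) ≤ (1 - 1 / k) * g n := hdecay
      _ ≤ (1 - 1 / k) * ((1 - 1 / k) ^ n * g 0) := by
        have : 1 / (k : ℝ) ≤ 1 := (div_le_one (by linarith)).mpr hk
        gcongr
        exact ih (by omega)
      _ = (1 - 1 / k) ^ (n + 1) * g 0 := by ring

theorem stmt_15_general {U : Type*} [DecidableEq U]
    (f : Finset U → ℝ) (k : ℕ) (hk : 0 < k)
    (hmono : ∀ S T : Finset U, S ⊆ T → f S ≤ f T)
    (hsub : ∀ S T : Finset U, S ⊆ T → ∀ x ∉ T,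
      f (insert x T) - f T ≤ f (insert x S) - f S)
    (hempty : f ∅ = 0)
    (S : ℕ → Finset U) (hS0 : S 0 = ∅)
    (hgreedy : ∀ i < k, ∃ x : U, S (i + 1) = insert x (S i) ∧
      ∀ y : U, f (insert y (S i)) - f (S i) ≤ f (insert x (S i)) - f (S i)) :
    ∀ T : Finset U, T.card ≤ k → (1 - (Real.exp 1)⁻¹) * f T ≤ f (S k) := by
  intro T hT
  have hmono' : Monotone f := fun A B h => hmono A B h
  have hstep : ∀ i < k, f T - f (S i) ≤ k * ((f T - f (S i)) - (f T - f (S (i + 1)))) := by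
    intro i hi
    obtain ⟨x, hx, hmax⟩ := hgreedy i hi
    rw [sub_sub_sub_cancel_left, hx]
    exact sub_le_mul_gain_of_isMax_gain hmono' hsub hT hmax
  have hdecay := le_one_sub_div_pow_mul_of_le_mul_sub hstep k le_rfl
  rw [hS0, hempty, sub_zero] at hdecay
  have hexp : (1 - 1 / (k : ℝ)) ^ k ≤ (Real.exp 1)⁻¹ := by
    rw [← Real.exp_neg]
    exact Real.one_sub_div_pow_le_exp_neg (by exact_mod_cast hk)
  have hT0 : 0 ≤ f T := hempty ▸ hmono' T.empty_subset
  nlinarith [mul_le_mul_of_nonneg_right hexp hT0]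

/-- The greedy algorithm for maximizing a monotone submodular set function `f` with
`f(∅) = 0` subject to a cardinality constraint `k` achieves a `(1 − 1/e)`-approximation:
if `S 0 = ∅` and at each of the `k` steps an element with maximal marginal gain is
added, then `f (S k) ≥ (1 − 1/e) · f T` for every `T` with `|T| ≤ k`. -/
theorem stmt_15 {U : Type*} [Fintype U] [DecidableEq U] [Nonempty U]
    (f : Finset U → ℝ) (k : ℕ) (hk : 0 < k)
    (hmono : ∀ S T : Finset U, S ⊆ T → f S ≤ f T)
    (hsub : ∀ S T : Finset U, S ⊆ T → ∀ x ∉ T,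
      f (insert x T) - f T ≤ f (insert x S) - f S)
    (hempty : f ∅ = 0)
    (S : ℕ → Finset U) (hS0 : S 0 = ∅)
    (hgreedy : ∀ i < k, ∃ x : U, S (i + 1) = insert x (S i) ∧
      ∀ y : U, f (insert y (S i)) - f (S i) ≤ f (insert x (S i)) - f (S i)) :
    ∀ T : Finset U, T.card ≤ k → (1 - (Real.exp 1)⁻¹) * f T ≤ f (S k) :=
  stmt_15_general f k hk hmono hsub hempty S hS0 hgreedy
end

section
/- Let U be a finite ground set, k a positive integer, α ∈ (0,1], and let μ_L, μ_0, μ_U be non-negative set functions on subsets of U with μ_L(S) ≤ μ_0(S) ≤ μ_U(S) for all S. Let S* maximize μ_0 over sets of size at most k, and suppose μ_0(S*) > 0. Let S_L, S_U, S_0 be sets of size at most k such that μ_L(S_L) ≥ α · max_{|S|≤k} μ_L(S), μ_U(S_U) ≥ α · max_{|S|≤k} μ_U(S) with μ_U(S_U) > 0, and let S be whichever of S_0, S_L, S_U has the largest value of μ_0. Then μ_0(S) ≥ max{ μ_0(S_U) / μ_U(S_U), μ_L(S*) / μ_0(S*) } · α · μ_0(S*). -/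
/-!
Both candidates beat the bound on their own: `μU SU ≥ α μU S* ≥ α μ0 S*`, so `μ0 SU` is at least
the fraction `μ0 SU / μU SU` of `α μ0 S*`; and `μ0 SL ≥ μL SL ≥ α μL S*`, which is the fraction
`μL S* / μ0 S*` of `α μ0 S*`. The best of the candidates dominates both.
-/

section Sandwich

variable {ι : Type*} {α : ℝ}

theorem div_mul_le_of_le {a b c : ℝ} (ha : 0 ≤ a) (hb : 0 < b) (hc : c ≤ b) : a / b * c ≤ a :=
  calc a / b * c ≤ a / b * b := mul_le_mul_of_nonneg_left hc (div_nonneg ha hb.le)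
    _ = a := div_mul_cancel₀ a hb.ne'

theorem sandwich_upper_guarantee (hα : 0 ≤ α) {μ0 μU : ι → ℝ} {Sstar SU : ι}
    (hsand : μ0 Sstar ≤ μU Sstar) (hSU : α * μU Sstar ≤ μU SU) (hSU_pos : 0 < μU SU)
    (hnn : 0 ≤ μ0 SU) :
    μ0 SU / μU SU * α * μ0 Sstar ≤ μ0 SU := by
  rw [mul_assoc]
  exact div_mul_le_of_le hnn hSU_pos ((mul_le_mul_of_nonneg_left hsand hα).trans hSU)

theorem sandwich_lower_guarantee {μL μ0 : ι → ℝ} {Sstar SL : ι}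
    (hstar : μ0 Sstar ≠ 0) (hSL : α * μL Sstar ≤ μL SL) (hsand : μL SL ≤ μ0 SL) :
    μL Sstar / μ0 Sstar * α * μ0 Sstar ≤ μ0 SL := by
  calc μL Sstar / μ0 Sstar * α * μ0 Sstar = α * μL Sstar := by field_simp
    _ ≤ μ0 SL := hSL.trans hsand

end Sandwich

theorem stmt_16_general {U : Type*}
    (k : ℕ) (α : ℝ) (hα0 : 0 < α)
    (μL μ0 μU : Finset U → ℝ)
    (hnn0 : ∀ S, 0 ≤ μ0 S)
    (hsand : ∀ S, μL S ≤ μ0 S ∧ μ0 S ≤ μU S)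
    (Sstar : Finset U) (hstar_card : Sstar.card ≤ k)
    (hstar_pos : 0 < μ0 Sstar)
    (S0 SL SU : Finset U)
    (hSL : ∀ T : Finset U, T.card ≤ k → α * μL T ≤ μL SL)
    (hSU : ∀ T : Finset U, T.card ≤ k → α * μU T ≤ μU SU)
    (hSU_pos : 0 < μU SU)
    (S : Finset U)
    (hSbest : μ0 S0 ≤ μ0 S ∧ μ0 SL ≤ μ0 S ∧ μ0 SU ≤ μ0 S) :
    max (μ0 SU / μU SU) (μL Sstar / μ0 Sstar) * α * μ0 Sstar ≤ μ0 S := by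
  have hupper : μ0 SU / μU SU * α * μ0 Sstar ≤ μ0 S :=
    (sandwich_upper_guarantee hα0.le (hsand Sstar).2 (hSU Sstar hstar_card) hSU_pos
      (hnn0 SU)).trans hSbest.2.2
  have hlower : μL Sstar / μ0 Sstar * α * μ0 Sstar ≤ μ0 S :=
    (sandwich_lower_guarantee hstar_pos.ne' (hSL Sstar hstar_card) (hsand SL).1).trans hSbest.2.1
  rcases max_choice (μ0 SU / μU SU) (μL Sstar / μ0 Sstar) with h | h <;> rw [h]
  · exact hupper
  · exact hlower

/-- The sandwich approximation guarantee (Lu et al.): if `μL ≤ μ0 ≤ μU` are non-negative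
set functions, `S*` maximizes `μ0` over sets of size at most `k` with `μ0(S*) > 0`,
`S_L` and `S_U` are `α`-approximate maximizers of `μL` and `μU` respectively (with
`μU(S_U) > 0`), and `S` is whichever of `S_0, S_L, S_U` has the largest `μ0`-value,
then `μ0(S) ≥ max{μ0(S_U)/μU(S_U), μL(S*)/μ0(S*)} · α · μ0(S*)`. -/
theorem stmt_16 {U : Type*} [Fintype U] [DecidableEq U]
    (k : ℕ) (α : ℝ) (hα0 : 0 < α) (hα1 : α ≤ 1)
    (μL μ0 μU : Finset U → ℝ)
    (hnnL : ∀ S, 0 ≤ μL S) (hnn0 : ∀ S, 0 ≤ μ0 S) (hnnU : ∀ S, 0 ≤ μU S)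
    (hsand : ∀ S, μL S ≤ μ0 S ∧ μ0 S ≤ μU S)
    (Sstar : Finset U) (hstar_card : Sstar.card ≤ k)
    (hstar_max : ∀ T : Finset U, T.card ≤ k → μ0 T ≤ μ0 Sstar)
    (hstar_pos : 0 < μ0 Sstar)
    (S0 SL SU : Finset U)
    (hS0_card : S0.card ≤ k) (hSL_card : SL.card ≤ k) (hSU_card : SU.card ≤ k)
    (hSL : ∀ T : Finset U, T.card ≤ k → α * μL T ≤ μL SL)
    (hSU : ∀ T : Finset U, T.card ≤ k → α * μU T ≤ μU SU)
    (hSU_pos : 0 < μU SU)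
    (S : Finset U) (hS : S = S0 ∨ S = SL ∨ S = SU)
    (hSbest : μ0 S0 ≤ μ0 S ∧ μ0 SL ≤ μ0 S ∧ μ0 SU ≤ μ0 S) :
    max (μ0 SU / μU SU) (μL Sstar / μ0 Sstar) * α * μ0 Sstar ≤ μ0 S :=
  stmt_16_general k α hα0 μL μ0 μU hnn0 hsand Sstar hstar_card hstar_pos S0 SL SU hSL hSU hSU_pos S
    hSbest
end

section
/- Let n and k be positive integers with k ≤ n, let ε > 0, ℓ > 0, χ > 0, and OPT > 0. Let x_1, …, x_θ be independent identically distributed real random variables with common mean x satisfying 0 ≤ n·x ≤ OPT, |x_j| ≤ χ almost surely, and Var[x_j] ≤ χ x. Set λ = (8 n χ / ε^2)(ε/3 + 1)(ℓ ln n + ln 2 + ln C(n,k)), where C(n,k) is the binomial coefficient. If θ ≥ λ / OPT, then Pr[ | (n/θ) ∑_{j=1}^θ x_j − n x | ≥ (ε/2) · OPT ] ≤ 1 / (n^ℓ · C(n,k)). -/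
/-!
The deviations `X j - x` are independent, centred, bounded by `2χ` and have variance at most
`χ x ≤ χ OPT / n`, so Bernstein's inequality bounds each tail of their sum by
`exp (-θ a² / (2 (V + a b / 3)))`, where `a = ε OPT / (2n)` is the per-sample deviation,
`b = 2χ` and `V = χ OPT / n`. This exponent equals
`θ ε² OPT / (8 n χ (1 + ε/3)) = θ OPT / λ`, so the sample size `θ ≥ λ / OPT` makes it at least
`ℓ ln n + ln 2 + ln C(n,k)`, and the two tails together have probability at most
`1 / (n^ℓ C(n,k))`.
-/

open MeasureTheory ProbabilityTheory

open Nat in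
theorem two_mul_three_pow_le_factorial (i : ℕ) : 2 * 3 ^ i ≤ (i + 2)! := by
  induction i with
  | zero => decide
  | succ i ih =>
    rw [Nat.factorial_succ, pow_succ]
    nlinarith

/-- The tail `∑_{i ≥ 2} z^i / i!` of the exponential series is dominated by the geometric series
`z² / 2 · ∑ (|z| / 3)^i`. -/
theorem Real.exp_le_one_add_add_sq_div {z : ℝ} (hz : |z| < 3) :
    Real.exp z ≤ 1 + z + z ^ 2 / (2 * (1 - |z| / 3)) := by
  have hexp := NormedSpace.expSeries_div_hasSum_exp z
  rw [← Real.exp_eq_exp_ℝ, ← hasSum_nat_add_iff' 2] at hexp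
  have hr : |z| / 3 < 1 := by rw [div_lt_one (by norm_num)]; exact hz
  have hgeom := (hasSum_geometric_of_lt_one (by positivity) hr).mul_left (z ^ 2 / 2)
  have hle := hasSum_le (fun i => ?_) hexp hgeom
  · simp only [Finset.sum_range_succ, Finset.sum_range_zero] at hle
    rw [← div_div, div_eq_mul_inv (z ^ 2 / 2)]
    norm_num at hle
    linarith
  · calc z ^ (i + 2) / ((i + 2).factorial : ℝ) ≤ |z| ^ (i + 2) / ((i + 2).factorial : ℝ) :=
          div_le_div_of_nonneg_right ((le_abs_self _).trans (abs_pow z _).le) (by positivity)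
      _ ≤ |z| ^ (i + 2) / (2 * 3 ^ i) := by
          gcongr
          exact_mod_cast two_mul_three_pow_le_factorial i
      _ = z ^ 2 / 2 * (|z| / 3) ^ i := by
          rw [pow_add, sq_abs, div_pow]; ring

namespace ProbabilityTheory

variable {Ω : Type*} [MeasurableSpace Ω] {μ : Measure Ω} [IsProbabilityMeasure μ]

theorem abs_integral_le_of_ae_abs_le {f : Ω → ℝ} {c : ℝ} (h : ∀ᵐ ω ∂μ, |f ω| ≤ c) :
    |μ[f]| ≤ c := by
  simpa using norm_integral_le_of_norm_le_const (μ := μ) (f := f)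
    (by simpa only [Real.norm_eq_abs] using h)

theorem mgf_le_exp_of_abs_le {Z : Ω → ℝ} {b V t : ℝ} (hZ : AEMeasurable Z μ)
    (hmean : μ[Z] = 0) (hbdd : ∀ᵐ ω ∂μ, |Z ω| ≤ b) (hvar : variance Z μ ≤ V)
    (ht : 0 ≤ t) (htb : t * b < 3) :
    mgf Z μ t ≤ Real.exp (t ^ 2 * V / (2 * (1 - t * b / 3))) := by
  set c := t ^ 2 / (2 * (1 - t * b / 3)) with hc
  have hZint : Integrable Z μ := .of_bound hZ.aestronglyMeasurable b (by simpa using hbdd)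
  have hZ2int : Integrable (fun ω => Z ω ^ 2) μ :=
    .of_bound (hZ.pow_const 2).aestronglyMeasurable (b ^ 2) (by
      filter_upwards [hbdd] with ω hω
      simpa [sq_abs] using pow_le_pow_left₀ (abs_nonneg _) hω 2)
  have hpoint : ∀ᵐ ω ∂μ, Real.exp (t * Z ω) ≤ 1 + t * Z ω + c * Z ω ^ 2 := by
    filter_upwards [hbdd] with ω hω
    have htZ : |t * Z ω| ≤ t * b := by
      rw [abs_mul, abs_of_nonneg ht]; exact mul_le_mul_of_nonneg_left hω ht
    calc Real.exp (t * Z ω) ≤ 1 + t * Z ω + (t * Z ω) ^ 2 / (2 * (1 - |t * Z ω| / 3)) :=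
          Real.exp_le_one_add_add_sq_div (by linarith)
      _ ≤ 1 + t * Z ω + (t * Z ω) ^ 2 / (2 * (1 - t * b / 3)) := by
          gcongr
          linarith
      _ = 1 + t * Z ω + c * Z ω ^ 2 := by ring
  have hvar' : ∫ ω, Z ω ^ 2 ∂μ ≤ V := variance_of_integral_eq_zero hZ hmean ▸ hvar
  have hlin : Integrable (fun ω => 1 + t * Z ω) μ := (integrable_const 1).add (hZint.const_mul t)
  calc mgf Z μ t ≤ ∫ ω, (1 + t * Z ω + c * Z ω ^ 2) ∂μ :=
        integral_mono_ae (integrable_exp_mul_of_le t b ht hZ (by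
            filter_upwards [hbdd] with ω hω using (le_abs_self _).trans hω))
          (hlin.add (hZ2int.const_mul c)) hpoint
    _ = 1 + c * ∫ ω, Z ω ^ 2 ∂μ := by
        rw [integral_add hlin (hZ2int.const_mul c),
          integral_add (integrable_const 1) (hZint.const_mul t),
          integral_const_mul, integral_const_mul, hmean]
        simp
    _ ≤ 1 + c * V := by
        have : 0 < 1 - t * b / 3 := by linarith
        gcongr
    _ = 1 + t ^ 2 * V / (2 * (1 - t * b / 3)) := by ring
    _ ≤ Real.exp (t ^ 2 * V / (2 * (1 - t * b / 3))) := by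
        linarith [Real.add_one_le_exp (t ^ 2 * V / (2 * (1 - t * b / 3)))]

theorem measureReal_sum_ge_le_exp {ι : Type*} [Fintype ι] {Z : ι → Ω → ℝ} {a b V : ℝ}
    (hindep : iIndepFun Z μ) (hmeas : ∀ i, Measurable (Z i)) (hmean : ∀ i, μ[Z i] = 0)
    (hbdd : ∀ i, ∀ᵐ ω ∂μ, |Z i ω| ≤ b) (hvar : ∀ i, variance (Z i) μ ≤ V)
    (ha : 0 < a) (hb : 0 ≤ b) (hV : 0 < V) :
    μ.real {ω | Fintype.card ι * a ≤ ∑ i, Z i ω} ≤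
      Real.exp (-(Fintype.card ι * a ^ 2 / (2 * (V + a * b / 3)))) := by
  set D := V + a * b / 3 with hD
  have hDpos : 0 < D := by positivity
  -- The Chernoff parameter minimising the exponent; with it `1 - t b / 3 = V / D`.
  set t := a / D with ht
  have ht0 : 0 ≤ t := by positivity
  have htb : t * b < 3 := by
    rw [ht, div_mul_eq_mul_div, div_lt_iff₀ hDpos]; linarith
  have hint : Integrable (fun ω => Real.exp (t * (∑ i, Z i) ω)) μ :=
    hindep.integrable_exp_mul_sum hmeas fun i _ => integrable_exp_mul_of_le t b ht0
      (hmeas i).aemeasurable (by filter_upwards [hbdd i] with ω hω using (le_abs_self _).trans hω)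
  calc μ.real {ω | Fintype.card ι * a ≤ ∑ i, Z i ω}
      ≤ Real.exp (-t * (Fintype.card ι * a)) * mgf (∑ i, Z i) μ t := by
        simpa only [Finset.sum_apply] using measure_ge_le_exp_mul_mgf _ ht0 hint
    _ = Real.exp (-t * (Fintype.card ι * a)) * ∏ i, mgf (Z i) μ t := by
        rw [hindep.mgf_sum hmeas]
    _ ≤ Real.exp (-t * (Fintype.card ι * a)) *
          ∏ _i : ι, Real.exp (t ^ 2 * V / (2 * (1 - t * b / 3))) := by
        gcongr with i
        · exact fun i _ => mgf_nonneg
        · exact mgf_le_exp_of_abs_le (hmeas i).aemeasurable (hmean i) (hbdd i) (hvar i) ht0 htb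
    _ = Real.exp (-(Fintype.card ι * a ^ 2 / (2 * D))) := by
        rw [Finset.prod_const, Finset.card_univ, ← Real.exp_nat_mul, ← Real.exp_add, ht, hD]
        congr 1
        field_simp
        ring

theorem measureReal_abs_sum_ge_le_two_mul_exp {ι : Type*} [Fintype ι] {Z : ι → Ω → ℝ}
    {a b V : ℝ} (hindep : iIndepFun Z μ) (hmeas : ∀ i, Measurable (Z i))
    (hmean : ∀ i, μ[Z i] = 0) (hbdd : ∀ i, ∀ᵐ ω ∂μ, |Z i ω| ≤ b)
    (hvar : ∀ i, variance (Z i) μ ≤ V) (ha : 0 < a) (hb : 0 ≤ b) (hV : 0 < V) :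
    μ.real {ω | Fintype.card ι * a ≤ |∑ i, Z i ω|} ≤
      2 * Real.exp (-(Fintype.card ι * a ^ 2 / (2 * (V + a * b / 3)))) := by
  have hupper := measureReal_sum_ge_le_exp hindep hmeas hmean hbdd hvar ha hb hV
  have hlower := measureReal_sum_ge_le_exp (Z := fun i ω => -Z i ω)
    (hindep.comp (fun _ => Neg.neg) fun _ => measurable_neg) (fun i => (hmeas i).neg)
    (fun i => by rw [integral_neg, hmean i, neg_zero])
    (fun i => by simpa only [abs_neg] using hbdd i)
    (fun i => variance_fun_neg.trans_le (hvar i)) ha hb hV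
  calc μ.real {ω | Fintype.card ι * a ≤ |∑ i, Z i ω|}
      ≤ μ.real ({ω | Fintype.card ι * a ≤ ∑ i, Z i ω} ∪
          {ω | Fintype.card ι * a ≤ ∑ i, -Z i ω}) := by
        refine measureReal_mono (fun ω hω => ?_)
        simp only [Set.mem_ofPred_eq, Set.mem_union, Finset.sum_neg_distrib] at hω ⊢
        exact le_abs'.1 hω |>.symm.imp_right fun h => by linarith
    _ ≤ _ := (measureReal_union_le _ _).trans (by linarith)

theorem measureReal_abs_sum_sub_ge_le_two_mul_exp {ι : Type*} [Fintype ι] {X : ι → Ω → ℝ}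
    {x c a V : ℝ} (hindep : iIndepFun X μ) (hmeas : ∀ i, Measurable (X i))
    (hmean : ∀ i, μ[X i] = x) (hbdd : ∀ i, ∀ᵐ ω ∂μ, |X i ω| ≤ c)
    (hvar : ∀ i, variance (X i) μ ≤ V) (ha : 0 < a) (hc : 0 ≤ c) (hV : 0 < V) :
    μ.real {ω | Fintype.card ι * a ≤ |∑ i, (X i ω - x)|} ≤
      2 * Real.exp (-(Fintype.card ι * a ^ 2 / (2 * (V + a * (2 * c) / 3)))) := by
  have hXint : ∀ i, Integrable (X i) μ := fun i =>
    .of_bound (hmeas i).aestronglyMeasurable c (by simpa only [Real.norm_eq_abs] using hbdd i)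
  refine measureReal_abs_sum_ge_le_two_mul_exp (Z := fun i ω => X i ω - x)
    (hindep.comp (fun _ y => y - x) fun _ => measurable_id.sub_const x)
    (fun i => (hmeas i).sub_const x)
    (fun i => by rw [integral_sub (hXint i) (integrable_const x), hmean i]; simp)
    (fun i => ?_) (fun i => (variance_sub_const (hmeas i).aestronglyMeasurable x).trans_le (hvar i))
    ha (by positivity) hV
  have hx : |x| ≤ c := hmean i ▸ abs_integral_le_of_ae_abs_le (hbdd i)
  filter_upwards [hbdd i] with ω hω
  linarith [abs_sub (X i ω) x]

end ProbabilityTheory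

theorem le_abs_div_mul_sum_sub_iff {θ : ℕ} (hθ : 0 < θ) {n : ℝ} (hn : 0 < n) (r x : ℝ)
    (y : Fin θ → ℝ) :
    r ≤ |n / θ * ∑ j, y j - n * x| ↔ θ * (r / n) ≤ |∑ j, (y j - x)| := by
  have hθ' : (0 : ℝ) < θ := by exact_mod_cast hθ
  have hfactor : n / θ * ∑ j, y j - n * x = n / θ * ∑ j, (y j - x) := by
    rw [Finset.sum_sub_distrib, Finset.sum_const, Finset.card_univ, Fintype.card_fin,
      nsmul_eq_mul]
    field_simp
  rw [hfactor, abs_mul, abs_of_pos (by positivity), ← div_le_iff₀' (by positivity)]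
  field_simp

theorem le_bernstein_exponent_of_sample_size {n ε χ OPT L θ : ℝ} (hn : 0 < n) (hε : 0 < ε)
    (hχ : 0 < χ) (hOPT : 0 < OPT) (hθ : (8 * n * χ / ε ^ 2) * (ε / 3 + 1) * L / OPT ≤ θ) :
    L ≤ θ * (ε / 2 * OPT / n) ^ 2 / (2 * (χ * OPT / n + ε / 2 * OPT / n * (2 * χ) / 3)) := by
  have hq : (ε / 2 * OPT / n) ^ 2 / (2 * (χ * OPT / n + ε / 2 * OPT / n * (2 * χ) / 3))
      = OPT / ((8 * n * χ / ε ^ 2) * (ε / 3 + 1)) := by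
    field_simp
    ring
  rw [mul_div_assoc, hq, ← mul_div_assoc, le_div_iff₀' (by positivity)]
  exact (div_le_iff₀ hOPT).1 hθ

theorem two_mul_exp_neg_log_eq {n C : ℝ} (hn : 0 < n) (hC : 0 < C) (ℓ : ℝ) :
    2 * Real.exp (-(ℓ * Real.log n + Real.log 2 + Real.log C)) = 1 / (n ^ ℓ * C) := by
  rw [Real.exp_neg, Real.exp_add, Real.exp_add, Real.exp_log two_pos, Real.exp_log hC,
    mul_comm ℓ, ← Real.rpow_def_of_pos hn]
  field_simp

theorem stmt_18_general {Ω : Type*} [MeasurableSpace Ω] (μ : Measure Ω)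
    [IsProbabilityMeasure μ]
    (n k : ℕ) (hn : 0 < n) (hkn : k ≤ n)
    (ε ℓ χ OPT : ℝ) (hε : 0 < ε) (hℓ : 0 < ℓ) (hχ : 0 < χ) (hOPT : 0 < OPT)
    (θ : ℕ) (X : Fin θ → Ω → ℝ) (x : ℝ)
    (hmeas : ∀ j, Measurable (X j))
    (hindep : iIndepFun X μ)
    (hmean : ∀ j, ∫ ω, X j ω ∂μ = x)
    (hxOPT : (n : ℝ) * x ≤ OPT)
    (hbdd : ∀ j, ∀ᵐ ω ∂μ, |X j ω| ≤ χ)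
    (hvar : ∀ j, variance (X j) μ ≤ χ * x)
    (hθ : ((8 * n * χ / ε ^ 2) * (ε / 3 + 1) *
        (ℓ * Real.log n + Real.log 2 + Real.log (Nat.choose n k))) / OPT ≤ (θ : ℝ)) :
    (μ {ω | (ε / 2) * OPT ≤ |((n : ℝ) / θ) * (∑ j, X j ω) - n * x|}).toReal ≤
      1 / ((n : ℝ) ^ ℓ * Nat.choose n k) := by
  have hnR : (0 : ℝ) < n := by exact_mod_cast hn
  have hC : (1 : ℝ) ≤ n.choose k := by exact_mod_cast Nat.choose_pos hkn
  have hθpos : 0 < θ := by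
    have := Real.log_nonneg (show (1 : ℝ) ≤ n by exact_mod_cast hn)
    have := Real.log_nonneg hC
    have := Real.log_pos one_lt_two
    exact_mod_cast (by positivity : (0 : ℝ) < _).trans_le hθ
  have hvar' : ∀ j, variance (X j) μ ≤ χ * OPT / n := fun j => (hvar j).trans <| by
    rw [mul_div_assoc]; gcongr; rwa [le_div_iff₀' hnR]
  calc (μ {ω | (ε / 2) * OPT ≤ |((n : ℝ) / θ) * (∑ j, X j ω) - n * x|}).toReal
      = μ.real {ω | θ * (ε / 2 * OPT / n) ≤ |∑ j, (X j ω - x)|} := by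
        simp only [le_abs_div_mul_sum_sub_iff hθpos hnR, measureReal_def]
    _ ≤ 2 * Real.exp (-(ℓ * Real.log n + Real.log 2 + Real.log (n.choose k))) := by
        refine (Fintype.card_fin θ ▸ measureReal_abs_sum_sub_ge_le_two_mul_exp hindep hmeas hmean
          hbdd hvar' (by positivity) hχ.le (by positivity)).trans ?_
        gcongr
        exact le_bernstein_exponent_of_sample_size hnR hε hχ hOPT hθ
    _ = 1 / ((n : ℝ) ^ ℓ * Nat.choose n k) := two_mul_exp_neg_log_eq hnR (by linarith) ℓ

/-- Sample-size bound for RR-set estimation: with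
`λ = (8nχ/ε²)(ε/3 + 1)(ℓ ln n + ln 2 + ln C(n,k))` and `θ ≥ λ/OPT` i.i.d. samples,
each bounded by `χ` with mean `x` (where `0 ≤ n·x ≤ OPT`) and variance at most `χ·x`,
the estimator `(n/θ)·∑ x_j` deviates from `n·x` by at least `(ε/2)·OPT` with
probability at most `1/(n^ℓ · C(n,k))`. -/
theorem stmt_18 {Ω : Type*} [MeasurableSpace Ω] (μ : Measure Ω)
    [IsProbabilityMeasure μ]
    (n k : ℕ) (hn : 0 < n) (hk0 : 0 < k) (hkn : k ≤ n)
    (ε ℓ χ OPT : ℝ) (hε : 0 < ε) (hℓ : 0 < ℓ) (hχ : 0 < χ) (hOPT : 0 < OPT)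
    (θ : ℕ) (X : Fin θ → Ω → ℝ) (x : ℝ)
    (hmeas : ∀ j, Measurable (X j))
    (hindep : iIndepFun X μ)
    (hident : ∀ i j, IdentDistrib (X i) (X j) μ μ)
    (hmean : ∀ j, ∫ ω, X j ω ∂μ = x)
    (hx0 : 0 ≤ (n : ℝ) * x) (hxOPT : (n : ℝ) * x ≤ OPT)
    (hbdd : ∀ j, ∀ᵐ ω ∂μ, |X j ω| ≤ χ)
    (hvar : ∀ j, variance (X j) μ ≤ χ * x)
    (hθ : ((8 * n * χ / ε ^ 2) * (ε / 3 + 1) *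
        (ℓ * Real.log n + Real.log 2 + Real.log (Nat.choose n k))) / OPT ≤ (θ : ℝ)) :
    (μ {ω | (ε / 2) * OPT ≤ |((n : ℝ) / θ) * (∑ j, X j ω) - n * x|}).toReal ≤
      1 / ((n : ℝ) ^ ℓ * Nat.choose n k) :=
  stmt_18_general μ n k hn hkn ε ℓ χ OPT hε hℓ hχ hOPT θ X x hmeas hindep hmean hxOPT hbdd hvar hθ
end

section
/- Let n ≥ 2 and k ≤ n be positive integers, ε₂ > 0, ℓ > 0, χ > 0, and y > 0. Set β = n·((4/3)ε₂ + 2)·(ℓ ln n + ln log₂(2n) + ln C(n,k)) / ε₂², where C(n,k) is the binomial coefficient. Let x_1, …, x_θ be independent identically distributed real random variables with common mean x ≥ 0 satisfying |x_j| ≤ χ almost surely and Var[x_j] ≤ χ x, and suppose θ ≥ β / y. Then: (1) if n·x < y·χ, then Pr[ (n/θ) ∑_{j=1}^θ x_j ≥ (1 + ε₂)·y·χ ] ≤ n^{−ℓ} / (log₂(n) · C(n,k)); and (2) for any OPT with n·x ≤ OPT and OPT ≥ y·χ, Pr[ (n/θ) ∑_{j=1}^θ x_j > (1 + ε₂)·OPT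 ] ≤ n^{−ℓ} / (log₂(n) · C(n,k)). -/
/-!
For `w ≤ c < 3` one has `exp w ≤ 1 + w + w² / (2 (1 - c/3))` (compare the exponential series with
a geometric one), so a sample `Y` with `Y - E Y ≤ b` has `E exp (t (Y - E Y)) ≤
exp (t² Var Y / (2 (1 - t b/3)))`. For `θ` independent such samples of mean `x` and variance at
most `v`, Chernoff's bound turns this into Bernstein's inequality
`P(∑ Y_j ≥ θ (x + a)) ≤ exp (-θ a² / (2 (v + b a/3)))`. For a threshold `(1 + ε₂) M`
with `M ≥ n x` and `M ≥ y χ` this is at most `exp (-θ ε₂² M / (n (2 + 2ε₂/3) χ))`, and the sample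
size `θ ≥ β / y` makes the exponent at least `ln (n^ℓ log₂ (2n) C(n,k))`.
-/

open MeasureTheory ProbabilityTheory Real
open scoped Nat

lemma exp_sub_one_sub_le_sq_div {u : ℝ} (h0 : 0 ≤ u) (h3 : u < 3) :
    exp u - 1 - u ≤ u ^ 2 / (2 * (1 - u / 3)) := by
  have htail : HasSum (fun n ↦ u ^ (n + 2) / (n + 2)!) (exp u - 1 - u) := by
    have h := (hasSum_nat_add_iff' 2).2 (NormedSpace.expSeries_div_hasSum_exp u)
    rw [← exp_eq_exp_ℝ] at h
    simpa [Finset.sum_range_succ, sub_sub] using h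
  have hgeom : HasSum (fun n ↦ u ^ 2 / 2 * (u / 3) ^ n) (u ^ 2 / 2 * (1 - u / 3)⁻¹) :=
    (hasSum_geometric_of_lt_one (by positivity) (by linarith)).mul_left _
  calc exp u - 1 - u ≤ u ^ 2 / 2 * (1 - u / 3)⁻¹ := hasSum_le (fun n ↦ ?_) htail hgeom
    _ = u ^ 2 / (2 * (1 - u / 3)) := by field_simp
  have hfact : (2 * 3 ^ n : ℝ) ≤ (n + 2)! := by
    exact_mod_cast add_comm n 2 ▸ Nat.factorial_mul_pow_le_factorial (m := 2) (n := n)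
  calc u ^ (n + 2) / (n + 2)! ≤ u ^ (n + 2) / (2 * 3 ^ n) := by gcongr
    _ = u ^ 2 / 2 * (u / 3) ^ n := by rw [div_pow, pow_add]; ring

lemma exp_le_one_add_add_sq_div_two_of_nonpos {w : ℝ} (hw : w ≤ 0) :
    exp w ≤ 1 + w + w ^ 2 / 2 := by
  have hcubic := sum_le_exp_of_nonneg (neg_nonneg.2 hw) 4
  simp only [Finset.sum_range_succ, Finset.sum_range_zero, Nat.factorial] at hcubic
  push_cast at hcubic
  have hinv : exp w * exp (-w) = 1 := by rw [← exp_add, add_neg_cancel, exp_zero]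
  -- `(1 + w + w²/2)` times the cubic Taylor polynomial of `exp (-w)` is
  -- `1 - w³/6 + w⁴/12 - w⁵/12 ≥ 1`
  nlinarith [exp_pos w, pow_two_nonneg w, mul_nonneg (neg_nonneg.2 hw) (pow_two_nonneg w),
    mul_nonneg (exp_pos w).le (mul_nonneg (neg_nonneg.2 hw) (pow_two_nonneg w))]

lemma exp_le_one_add_add_sq_div_of_le {c w : ℝ} (hc0 : 0 ≤ c) (hc3 : c < 3) (hw : w ≤ c) :
    exp w ≤ 1 + w + w ^ 2 / (2 * (1 - c / 3)) := by
  rcases le_total w 0 with hw0 | hw0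
  · calc exp w ≤ 1 + w + w ^ 2 / 2 := exp_le_one_add_add_sq_div_two_of_nonpos hw0
      _ ≤ _ := by gcongr <;> linarith
  · have := exp_sub_one_sub_le_sq_div hw0 (hw.trans_lt hc3)
    calc exp w ≤ 1 + w + w ^ 2 / (2 * (1 - w / 3)) := by linarith
      _ ≤ _ := by gcongr; linarith

section Bernstein

variable {Ω : Type*} [MeasurableSpace Ω] {μ : Measure Ω}

lemma integrable_exp_mul_of_ae_le [IsFiniteMeasure μ] {Y : Ω → ℝ} {t c : ℝ}
    (hY : AEMeasurable Y μ) (ht : 0 ≤ t) (hc : ∀ᵐ ω ∂μ, Y ω ≤ c) :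
    Integrable (fun ω ↦ exp (t * Y ω)) μ := by
  refine (integrable_const (exp (t * c))).mono' (by fun_prop) ?_
  filter_upwards [hc] with ω hω
  rw [norm_of_nonneg (exp_pos _).le]
  exact exp_le_exp.2 (mul_le_mul_of_nonneg_left hω ht)

variable [IsProbabilityMeasure μ]

lemma mgf_le_exp_of_sub_integral_le {Y : Ω → ℝ} {b t : ℝ} (hY : MemLp Y 2 μ)
    (hb : ∀ᵐ ω ∂μ, Y ω - μ[Y] ≤ b) (hb0 : 0 ≤ b) (ht : 0 ≤ t) (htb : t * b < 3) :
    mgf Y μ t ≤ exp (t * μ[Y] + t ^ 2 * variance Y μ / (2 * (1 - t * b / 3))) := by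
  set x := μ[Y]
  set K := t ^ 2 / (2 * (1 - t * b / 3)) with hK_def
  have hYint : Integrable Y μ := hY.integrable one_le_two
  have hlin : Integrable (fun ω ↦ t * (Y ω - x)) μ := (hYint.sub (integrable_const x)).const_mul t
  have hsq : Integrable (fun ω ↦ K * (Y ω - x) ^ 2) μ :=
    (hY.sub (memLp_const x)).integrable_sq.const_mul K
  have hbound : ∀ᵐ ω ∂μ,
      exp (t * Y ω) ≤ exp (t * x) * (1 + t * (Y ω - x) + K * (Y ω - x) ^ 2) := by
    filter_upwards [hb] with ω hω
    have hexp := exp_le_one_add_add_sq_div_of_le (mul_nonneg ht hb0) htb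
      (mul_le_mul_of_nonneg_left hω ht)
    calc exp (t * Y ω) = exp (t * x) * exp (t * (Y ω - x)) := by rw [← exp_add]; congr 1; ring
      _ ≤ _ := by
        gcongr
        have hK : (t * (Y ω - x)) ^ 2 / (2 * (1 - t * b / 3)) = K * (Y ω - x) ^ 2 := by
          rw [hK_def]; ring
        linarith
  have hquad : ∫ ω, 1 + t * (Y ω - x) + K * (Y ω - x) ^ 2 ∂μ = 1 + K * variance Y μ := by
    have haffine : Integrable (fun ω ↦ 1 + t * (Y ω - x)) μ := (integrable_const 1).add hlin
    rw [integral_add haffine hsq, integral_add (integrable_const 1) hlin,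
      integral_const_mul, integral_const_mul, integral_sub hYint (integrable_const x),
      variance_eq_integral hY.aestronglyMeasurable.aemeasurable]
    simp [x]
  calc mgf Y μ t ≤ ∫ ω, exp (t * x) * (1 + t * (Y ω - x) + K * (Y ω - x) ^ 2) ∂μ :=
        integral_mono_ae (integrable_exp_mul_of_ae_le hY.aestronglyMeasurable.aemeasurable ht
          (c := x + b) (hb.mono fun ω h ↦ by linarith))
          ((((integrable_const 1).add hlin).add hsq).const_mul _) hbound
    _ = exp (t * x) * (1 + K * variance Y μ) := by rw [integral_const_mul, hquad]
    _ ≤ exp (t * x) * exp (K * variance Y μ) := by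
        gcongr; linarith [add_one_le_exp (K * variance Y μ)]
    _ = _ := by rw [← exp_add, div_mul_eq_mul_div]

lemma measureReal_sum_ge_le_of_mgf_le {ι : Type*} [Fintype ι] {X : ι → Ω → ℝ} {t ψ : ℝ}
    (hindep : iIndepFun X μ) (hmeas : ∀ i, Measurable (X i)) (ht : 0 ≤ t)
    (hint : ∀ i, Integrable (fun ω ↦ exp (t * X i ω)) μ) (hmgf : ∀ i, mgf (X i) μ t ≤ exp ψ)
    (τ : ℝ) :
    μ.real {ω | τ ≤ ∑ i, X i ω} ≤ exp (Fintype.card ι * ψ - t * τ) := by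
  have hsum : {ω | τ ≤ ∑ i, X i ω} = {ω | τ ≤ (∑ i, X i) ω} := by simp only [Finset.sum_apply]
  rw [hsum]
  calc _ ≤ exp (-t * τ) * mgf (∑ i, X i) μ t := measure_ge_le_exp_mul_mgf τ ht
        (hindep.integrable_exp_mul_sum hmeas fun i _ ↦ hint i)
    _ ≤ exp (-t * τ) * ∏ _i : ι, exp ψ := by
        rw [hindep.mgf_sum hmeas]
        gcongr with i
        exacts [fun i _ ↦ mgf_nonneg, hmgf i]
    _ = _ := by rw [Finset.prod_const, ← exp_nat_mul, ← exp_add, Finset.card_univ]; ring_nf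

lemma measureReal_sum_ge_le_bernstein {ι : Type*} [Fintype ι] {X : ι → Ω → ℝ} {x v b a : ℝ}
    (hindep : iIndepFun X μ) (hmeas : ∀ i, Measurable (X i)) (hL2 : ∀ i, MemLp (X i) 2 μ)
    (hmean : ∀ i, μ[X i] = x) (hvar : ∀ i, variance (X i) μ ≤ v)
    (hb : ∀ i, ∀ᵐ ω ∂μ, X i ω - x ≤ b) (hv : 0 ≤ v) (hb0 : 0 < b) (ha : 0 < a) :
    μ.real {ω | Fintype.card ι * (x + a) ≤ ∑ i, X i ω} ≤
      exp (-(Fintype.card ι * a ^ 2 / (2 * (v + b * a / 3)))) := by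
  -- unlike the textbook `a / (v + b * a / 3)`, this `t` gives the same exponent while keeping
  -- `t * b ≤ 3 / 2` also when `v = 0`
  set t := a / (v + 2 * b * a / 3) with ht_def
  have hD : 0 < v + 2 * b * a / 3 := by positivity
  have ht : 0 ≤ t := by positivity
  have htb : t * b < 3 := by
    rw [ht_def, div_mul_eq_mul_div, div_lt_iff₀ hD]; nlinarith [mul_pos ha hb0]
  have hmgf : ∀ i, mgf (X i) μ t ≤ exp (t * x + t ^ 2 * v / (2 * (1 - t * b / 3))) := by
    intro i
    refine (mgf_le_exp_of_sub_integral_le (hL2 i) (by simpa only [hmean i] using hb i) hb0.le ht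
      htb).trans ?_
    rw [hmean i]
    gcongr
    · linarith
    · exact hvar i
  refine (measureReal_sum_ge_le_of_mgf_le hindep hmeas ht
    (fun i ↦ integrable_exp_mul_of_ae_le (c := x + b) (hmeas i).aemeasurable ht
      ((hb i).mono fun ω h ↦ by linarith)) hmgf _).trans_eq ?_
  have hE : 0 < v + b * a / 3 := by positivity
  have hone_sub : 1 - t * b / 3 = (v + b * a / 3) / (v + 2 * b * a / 3) := by
    rw [ht_def]; field_simp; ring
  congr 1
  rw [hone_sub, ht_def]
  field_simp
  ring

lemma measureReal_sum_ge_le_exp_of_abs_le {ι : Type*} [Fintype ι] {X : ι → Ω → ℝ}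
    {x χ ε m : ℝ} (hindep : iIndepFun X μ) (hmeas : ∀ i, Measurable (X i))
    (hmean : ∀ i, μ[X i] = x) (hbdd : ∀ i, ∀ᵐ ω ∂μ, |X i ω| ≤ χ)
    (hvar : ∀ i, variance (X i) μ ≤ χ * x) (hx : 0 ≤ x) (hχ : 0 < χ) (hε : 0 < ε)
    (hxm : x ≤ m) (hm : 0 < m) :
    μ.real {ω | Fintype.card ι * ((1 + ε) * m) ≤ ∑ i, X i ω} ≤
      exp (-(Fintype.card ι * ε ^ 2 * m / (2 * (1 + ε / 3) * χ))) := by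
  set a := (1 + ε) * m - x with ha_def
  have ha : ε * m ≤ a := by linarith
  have ha0 : 0 < a := (mul_pos hε hm).trans_le ha
  have hL2 : ∀ i, MemLp (X i) 2 μ := fun i ↦
    (memLp_top_of_bound (hmeas i).aestronglyMeasurable χ (hbdd i)).mono_exponent le_top
  have hb : ∀ i, ∀ᵐ ω ∂μ, X i ω - x ≤ χ := fun i ↦
    (hbdd i).mono fun ω h ↦ by linarith [le_abs_self (X i ω)]
  have hbern := measureReal_sum_ge_le_bernstein hindep hmeas hL2 hmean hvar hb
    (mul_nonneg hχ.le hx) hχ ha0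
  rw [show x + a = (1 + ε) * m by rw [ha_def]; ring] at hbern
  have hrate : ε ^ 2 * m / (2 * (1 + ε / 3) * χ) ≤ a ^ 2 / (2 * (χ * x + χ * a / 3)) := by
    have hD : 0 < 2 * (χ * x + χ * a / 3) := by nlinarith [mul_pos hχ ha0, mul_nonneg hχ.le hx]
    rw [div_le_div_iff₀ (by positivity) hD]
    -- the rate is increasing in `a` and equals the claimed one at `a = ε * m`
    nlinarith [mul_nonneg (sub_nonneg.2 ha) (by nlinarith :
      0 ≤ (1 + ε / 3) * (a + ε * m) + 2 / 3 * ε ^ 2 * m), hχ]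
  refine hbern.trans (exp_le_exp.2 (neg_le_neg ?_))
  simpa only [mul_div_assoc, mul_assoc] using
    mul_le_mul_of_nonneg_left hrate (Nat.cast_nonneg (α := ℝ) (Fintype.card ι))

end Bernstein

lemma setOf_le_div_mul_eq {α : Type*} {N T c : ℝ} (hN : 0 < N) (hT : 0 < T) (S : α → ℝ) :
    {a | c ≤ N / T * S a} = {a | T * (c / N) ≤ S a} := by
  ext a
  rw [Set.mem_ofPred_eq, Set.mem_ofPred_eq,
    show T * (c / N) = c / (N / T) by field_simp, div_le_iff₀' (by positivity)]

lemma le_exponent_of_sample_size {N ε χ y θ L M : ℝ} (hN : 0 < N) (hε : 0 < ε) (hχ : 0 < χ)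
    (hy : 0 < y) (hL : 0 ≤ L) (hθ : N * ((4 / 3) * ε + 2) * L / ε ^ 2 / y ≤ θ)
    (hM : y * χ ≤ M) :
    L ≤ θ * ε ^ 2 * (M / N) / (2 * (1 + ε / 3) * χ) := by
  have hθ0 : 0 ≤ θ := le_trans (by positivity) hθ
  rw [div_le_iff₀ hy, div_le_iff₀ (by positivity)] at hθ
  rw [le_div_iff₀ (by positivity)]
  refine le_of_mul_le_mul_left ?_ hN
  calc N * (L * (2 * (1 + ε / 3) * χ)) ≤ N * ((4 / 3) * ε + 2) * L * χ := by
        nlinarith [mul_nonneg (mul_nonneg hε.le hL) (mul_pos hχ hN).le]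
    _ ≤ θ * ε ^ 2 * y * χ := mul_le_mul_of_nonneg_right (by linarith) hχ.le
    _ ≤ θ * ε ^ 2 * M := by rw [mul_assoc _ y]; gcongr
    _ = N * (θ * ε ^ 2 * (M / N)) := by field_simp

lemma mul_log_add_log_logb_add_log_pos {N ℓ C : ℝ} (hN : 1 < N) (hC : 1 ≤ C) (hℓ : 0 < ℓ) :
    0 < ℓ * log N + log (logb 2 (2 * N)) + log C := by
  have h2N : 1 ≤ logb 2 (2 * N) := by
    rw [le_logb_iff_rpow_le one_lt_two (by positivity), rpow_one]; linarith
  linarith [mul_pos hℓ (log_pos hN), log_nonneg h2N, log_nonneg hC]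

lemma exp_neg_le_rpow_neg_div_logb_mul {N ℓ C r : ℝ} (hN : 1 < N) (hC : 0 < C)
    (hr : ℓ * log N + log (logb 2 (2 * N)) + log C ≤ r) :
    exp (-r) ≤ N ^ (-ℓ) / (logb 2 N * C) := by
  have hlogb : 0 < logb 2 N := logb_pos one_lt_two hN
  have h2N : logb 2 N ≤ logb 2 (2 * N) :=
    logb_le_logb_of_le one_lt_two (by linarith) (by linarith)
  calc exp (-r) ≤ exp (-(ℓ * log N + log (logb 2 (2 * N)) + log C)) := by gcongr
    _ = N ^ (-ℓ) / (logb 2 (2 * N) * C) := by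
        rw [neg_add, neg_add, exp_add, exp_add, exp_neg (log _), exp_neg (log C),
          exp_log (hlogb.trans_le h2N), exp_log hC, rpow_def_of_pos (by linarith),
          div_mul_eq_div_div, div_eq_mul_inv, div_eq_mul_inv, mul_neg, mul_comm (log N)]
    _ ≤ N ^ (-ℓ) / (logb 2 N * C) := by gcongr

theorem stmt_19_general {Ω : Type*} [MeasurableSpace Ω] (μ : Measure Ω)
    [IsProbabilityMeasure μ]
    (n k : ℕ) (hn : 2 ≤ n) (hkn : k ≤ n)
    (ε₂ ℓ χ y : ℝ) (hε₂ : 0 < ε₂) (hℓ : 0 < ℓ) (hχ : 0 < χ) (hy : 0 < y)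
    (θ : ℕ) (X : Fin θ → Ω → ℝ) (x : ℝ) (hx : 0 ≤ x)
    (hmeas : ∀ j, Measurable (X j))
    (hindep : iIndepFun X μ)
    (hmean : ∀ j, ∫ ω, X j ω ∂μ = x)
    (hbdd : ∀ j, ∀ᵐ ω ∂μ, |X j ω| ≤ χ)
    (hvar : ∀ j, variance (X j) μ ≤ χ * x)
    (hθ : (n * ((4 / 3) * ε₂ + 2) *
        (ℓ * Real.log n + Real.log (Real.logb 2 (2 * n)) + Real.log (Nat.choose n k)))
        / ε₂ ^ 2 / y ≤ (θ : ℝ)) :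
    ((n : ℝ) * x < y * χ →
      (μ {ω | (1 + ε₂) * y * χ ≤ ((n : ℝ) / θ) * ∑ j, X j ω}).toReal ≤
        (n : ℝ) ^ (-ℓ) / (Real.logb 2 n * Nat.choose n k)) ∧
    (∀ OPT : ℝ, (n : ℝ) * x ≤ OPT → y * χ ≤ OPT →
      (μ {ω | (1 + ε₂) * OPT < ((n : ℝ) / θ) * ∑ j, X j ω}).toReal ≤
        (n : ℝ) ^ (-ℓ) / (Real.logb 2 n * Nat.choose n k)) := by
  have hn1 : (1 : ℝ) < n := by exact_mod_cast hn
  have hC : (1 : ℝ) ≤ n.choose k := by exact_mod_cast Nat.choose_pos hkn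
  have hL := mul_log_add_log_logb_add_log_pos hn1 hC hℓ
  have hθ0 : (0 : ℝ) < θ :=
    lt_of_lt_of_le (div_pos (div_pos (mul_pos (by positivity) hL) (by positivity)) hy) hθ
  have key : ∀ M, n * x ≤ M → y * χ ≤ M →
      (μ {ω | (1 + ε₂) * M ≤ (n / θ) * ∑ j, X j ω}).toReal ≤
        n ^ (-ℓ) / (logb 2 n * n.choose k) := by
    intro M hxM hM
    have hm : 0 < M / n := div_pos ((mul_pos hy hχ).trans_le hM) (by positivity)
    have hbern := measureReal_sum_ge_le_exp_of_abs_le hindep hmeas hmean hbdd hvar hx hχ hε₂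
      ((le_div_iff₀ (by positivity)).2 (by linarith)) hm
    rw [Fintype.card_fin] at hbern
    rw [setOf_le_div_mul_eq (by positivity) hθ0, mul_div_assoc]
    exact hbern.trans (exp_neg_le_rpow_neg_div_logb_mul hn1 (by linarith)
      (le_exponent_of_sample_size (by positivity) hε₂ hχ hy hL.le hθ hM))
  refine ⟨fun hxy ↦ by simpa only [mul_assoc] using key (y * χ) hxy.le le_rfl,
    fun OPT hxOPT hOPT ↦ ?_⟩
  refine (ENNReal.toReal_mono (measure_ne_top _ _) (measure_mono ?_)).trans (key OPT hxOPT hOPT)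
  exact Set.ofPred_subset_ofPred.2 fun _ ↦ le_of_lt

/-- Tail bounds behind the statistical test of the sampling algorithm: with
`β = n((4/3)ε₂ + 2)(ℓ ln n + ln log₂(2n) + ln C(n,k))/ε₂²` and `θ ≥ β/y` i.i.d.
samples, each bounded by `χ` with mean `x ≥ 0` and variance at most `χ·x`:
(1) if `n·x < y·χ` then `(n/θ)·∑ x_j ≥ (1+ε₂)·y·χ` with probability at most
`n^{−ℓ}/(log₂(n)·C(n,k))`; and (2) for any `OPT ≥ y·χ` with `n·x ≤ OPT`,
`(n/θ)·∑ x_j > (1+ε₂)·OPT` with probability at most `n^{−ℓ}/(log₂(n)·C(n,k))`. -/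
theorem stmt_19 {Ω : Type*} [MeasurableSpace Ω] (μ : Measure Ω)
    [IsProbabilityMeasure μ]
    (n k : ℕ) (hn : 2 ≤ n) (hk0 : 0 < k) (hkn : k ≤ n)
    (ε₂ ℓ χ y : ℝ) (hε₂ : 0 < ε₂) (hℓ : 0 < ℓ) (hχ : 0 < χ) (hy : 0 < y)
    (θ : ℕ) (X : Fin θ → Ω → ℝ) (x : ℝ) (hx : 0 ≤ x)
    (hmeas : ∀ j, Measurable (X j))
    (hindep : iIndepFun X μ)
    (hident : ∀ i j, IdentDistrib (X i) (X j) μ μ)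
    (hmean : ∀ j, ∫ ω, X j ω ∂μ = x)
    (hbdd : ∀ j, ∀ᵐ ω ∂μ, |X j ω| ≤ χ)
    (hvar : ∀ j, variance (X j) μ ≤ χ * x)
    (hθ : (n * ((4 / 3) * ε₂ + 2) *
        (ℓ * Real.log n + Real.log (Real.logb 2 (2 * n)) + Real.log (Nat.choose n k)))
        / ε₂ ^ 2 / y ≤ (θ : ℝ)) :
    ((n : ℝ) * x < y * χ →
      (μ {ω | (1 + ε₂) * y * χ ≤ ((n : ℝ) / θ) * ∑ j, X j ω}).toReal ≤
        (n : ℝ) ^ (-ℓ) / (Real.logb 2 n * Nat.choose n k)) ∧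
    (∀ OPT : ℝ, (n : ℝ) * x ≤ OPT → y * χ ≤ OPT →
      (μ {ω | (1 + ε₂) * OPT < ((n : ℝ) / θ) * ∑ j, X j ω}).toReal ≤
        (n : ℝ) ^ (-ℓ) / (Real.logb 2 n * Nat.choose n k)) :=
  stmt_19_general μ n k hn hkn ε₂ ℓ χ y hε₂ hℓ hχ hy θ X x hx hmeas hindep hmean hbdd hvar hθ
end
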